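/- Let P and Q be orthogonal projections on a complex Hilbert space H and let T = PQ. Then R(T) is closed if and only if cl(R(T)) + N(T) = H. -/

import Mathlib

open ContinuousLinearMap Submodule LinearMap

variable {H : Type*} [NormedAddCommGroup H] [InnerProductSpace ℂ H] [CompleteSpace H]

/-- `P` is an orthogonal projection: `P² = P = P*`. -/
def IsOrthoProj (P : H →L[ℂ] H) : Prop :=
  P ∘L P = P ∧ ContinuousLinearMap.adjoint P = P

/-- The orthogonal projection onto a (complete, i.e. closed) subspace,
as an operator on `H`. -/
noncomputable def projOn (K : Submodule ℂ H) [CompleteSpace K] : H →L[ℂ] H :=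
  K.subtypeL.comp (orthogonalProjection K)

/-- The orthogonal projection onto a closed subspace, as an operator on `H`. -/
noncomputable def projOnc (K : Submodule ℂ H) (hK : IsClosed (K : Set H)) : H →L[ℂ] H :=
  haveI : CompleteSpace K := hK.completeSpace_coe
  K.subtypeL.comp (orthogonalProjection K)

open scoped InnerProductSpace

/-! Let `M, N` be the ranges of `P, Q` and `W = M ⊔ Nᗮ`. Then `ker (PQ) = Nᗮ ⊔ (Mᗮ ⊓ N)` with
`Mᗮ ⊓ N = Wᗮ`, and `cl (range (PQ)) ⊔ Nᗮ = W`, because a vector of `M` orthogonal to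
`range (PQ)` is killed by `(PQ)† = QP`, hence by `Q`. So `cl (range (PQ)) ⊔ ker (PQ) = W ⊔ Wᗮ`,
which is everything exactly when `W` is closed. On the other side, by the closed range theorem
`range (PQ)` is closed iff `range (QP) = Q(M)` is, and `Q(M)` is closed iff its preimage
`M ⊔ Nᗮ` under `Q` is. -/

namespace ContinuousLinearMap

variable {𝕜 E F : Type*} [RCLike 𝕜] [NormedAddCommGroup E] [InnerProductSpace 𝕜 E] [CompleteSpace E]
  [NormedAddCommGroup F] [InnerProductSpace 𝕜 F] [CompleteSpace F]

theorem exists_norm_le_mul_norm_adjoint_of_isClosed_range (T : E →L[𝕜] F)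
    (hT : IsClosed (LinearMap.range (T : E →ₗ[𝕜] F) : Set F)) :
    ∃ C > 0, ∀ y ∈ LinearMap.range (T : E →ₗ[𝕜] F), ‖y‖ ≤ C * ‖adjoint T y‖ := by
  have : CompleteSpace (LinearMap.range (T : E →ₗ[𝕜] F)) := hT.completeSpace_coe
  obtain ⟨C, hC, hpre⟩ := T.rangeRestrict.exists_preimage_norm_le T.surjective_rangeRestrict
  refine ⟨C, hC, fun y hy => ?_⟩
  obtain ⟨x, hxy, hx⟩ := hpre ⟨y, hy⟩
  replace hxy : T x = y := congrArg Subtype.val hxy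
  have hsq : ‖y‖ * ‖y‖ ≤ (C * ‖adjoint T y‖) * ‖y‖ :=
    calc ‖y‖ * ‖y‖ = RCLike.re ⟪adjoint T y, x⟫_𝕜 := by
          rw [adjoint_inner_left, hxy, inner_self_eq_norm_mul_norm]
      _ ≤ ‖adjoint T y‖ * ‖x‖ := (RCLike.re_le_norm _).trans (norm_inner_le_norm _ _)
      _ ≤ ‖adjoint T y‖ * (C * ‖y‖) := by gcongr; exact hx
      _ = (C * ‖adjoint T y‖) * ‖y‖ := by ring
  rcases (norm_nonneg y).eq_or_lt with hy0 | hy0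
  · rw [← hy0]; positivity
  · exact le_of_mul_le_mul_right hsq hy0

theorem isClosed_range_adjoint_of_isClosed_range (T : E →L[𝕜] F)
    (hT : IsClosed (LinearMap.range (T : E →ₗ[𝕜] F) : Set F)) :
    IsClosed (LinearMap.range (adjoint T : F →ₗ[𝕜] E) : Set E) := by
  set R := LinearMap.range (T : E →ₗ[𝕜] F)
  have : CompleteSpace R := hT.completeSpace_coe
  obtain ⟨C, -, hC⟩ := T.exists_norm_le_mul_norm_adjoint_of_isClosed_range hT
  let g : R →L[𝕜] E := adjoint T ∘L R.subtypeL
  have hg : AntilipschitzWith C.toNNReal g := g.antilipschitz_of_bound fun y =>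
    (hC y y.2).trans (mul_le_mul_of_nonneg_right (Real.le_coe_toNNReal C) (norm_nonneg _))
  -- `T†` vanishes on `Rᗮ = ker T†`, so it has the same range as its restriction to `R`.
  have hrange : (LinearMap.range (adjoint T : F →ₗ[𝕜] E) : Set E) = Set.range g := by
    ext z
    constructor
    · rintro ⟨w, rfl⟩
      have hw : w - R.starProjection w ∈ LinearMap.ker (adjoint T : F →ₗ[𝕜] E) :=
        T.orthogonal_range ▸ R.sub_starProjection_mem_orthogonal w
      rw [LinearMap.mem_ker, map_sub, sub_eq_zero] at hw
      exact ⟨R.orthogonalProjectionOnto w, hw.symm⟩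
    · rintro ⟨y, rfl⟩
      exact ⟨y, rfl⟩
  rw [hrange]
  exact hg.isClosed_range g.uniformContinuous

theorem isClosed_range_adjoint_iff (T : E →L[𝕜] F) :
    IsClosed (LinearMap.range (adjoint T : F →ₗ[𝕜] E) : Set E) ↔
      IsClosed (LinearMap.range (T : E →ₗ[𝕜] F) : Set F) :=
  ⟨fun h => by simpa using (adjoint T).isClosed_range_adjoint_of_isClosed_range h,
    T.isClosed_range_adjoint_of_isClosed_range⟩

end ContinuousLinearMap

namespace Submodule

variable {𝕜 E : Type*} [RCLike 𝕜] [NormedAddCommGroup E] [InnerProductSpace 𝕜 E]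

theorem isClosed_of_hasOrthogonalProjection (K : Submodule 𝕜 E) [K.HasOrthogonalProjection] :
    IsClosed (K : Set E) := by
  rw [← K.orthogonal_orthogonal]
  exact isClosed_orthogonal _

theorem sup_orthogonal_eq_top_iff_isClosed [CompleteSpace E] (W : Submodule 𝕜 E) :
    W ⊔ Wᗮ = ⊤ ↔ IsClosed (W : Set E) := by
  refine ⟨fun h => ?_, fun h => ?_⟩
  · have : W.HasOrthogonalProjection := ⟨fun v => by
      obtain ⟨w, hw, z, hz, rfl⟩ := mem_sup.mp (h ▸ mem_top : v ∈ W ⊔ Wᗮ)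
      exact ⟨w, hw, by rwa [add_sub_cancel_left]⟩⟩
    exact W.isClosed_of_hasOrthogonalProjection
  · have : CompleteSpace W := h.completeSpace_coe
    exact sup_orthogonal_of_hasOrthogonalProjection

variable (U : Submodule 𝕜 E) [U.HasOrthogonalProjection]

theorem comap_starProjection (A : Submodule 𝕜 E) :
    A.comap (U.starProjection : E →ₗ[𝕜] E) = A ⊓ U ⊔ Uᗮ := by
  ext x
  constructor
  · intro hx
    exact mem_sup.mpr ⟨U.starProjection x, ⟨hx, by simp⟩, x - U.starProjection x,
      U.sub_starProjection_mem_orthogonal x, add_sub_cancel _ _⟩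
  · intro hx
    obtain ⟨a, ⟨haA, haU⟩, b, hb, rfl⟩ := mem_sup.mp hx
    simpa [mem_comap, starProjection_eq_self_iff.mpr haU,
      (starProjection_apply_eq_zero_iff U).mpr hb] using haA

theorem map_starProjection (K : Submodule 𝕜 E) :
    K.map (U.starProjection : E →ₗ[𝕜] E) = (K ⊔ Uᗮ) ⊓ U := by
  rw [← U.ker_starProjection, ← comap_map_eq]
  ext y
  constructor
  · rintro ⟨x, hx, rfl⟩
    refine ⟨mem_comap.mpr ?_, by simp⟩
    rw [ContinuousLinearMap.coe_coe, starProjection_eq_self_iff.mpr (U.starProjection_apply_mem x)]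
    exact mem_map_of_mem hx
  · rintro ⟨hy, hyU⟩
    rw [← starProjection_eq_self_iff.mpr hyU]
    exact hy

theorem isClosed_map_starProjection_iff (K : Submodule 𝕜 E) :
    IsClosed (K.map (U.starProjection : E →ₗ[𝕜] E) : Set E) ↔
      IsClosed ((K ⊔ Uᗮ : Submodule 𝕜 E) : Set E) := by
  refine ⟨fun h => ?_, fun h => ?_⟩
  · rw [← U.ker_starProjection, ← comap_map_eq]
    exact h.preimage U.starProjection.continuous
  · rw [map_starProjection]
    exact h.inter U.isClosed_of_hasOrthogonalProjection

section TwoProjections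

variable (M N : Submodule 𝕜 E) [M.HasOrthogonalProjection] [N.HasOrthogonalProjection]

theorem ker_starProjection_comp :
    LinearMap.ker ((M.starProjection ∘L N.starProjection : E →L[𝕜] E) : E →ₗ[𝕜] E) =
      (M ⊔ Nᗮ)ᗮ ⊔ Nᗮ := by
  rw [toLinearMap_comp, LinearMap.ker_comp, ker_starProjection, comap_starProjection,
    ← inf_orthogonal, N.orthogonal_orthogonal]

variable [CompleteSpace E]

theorem adjoint_starProjection_comp :
    adjoint (M.starProjection ∘L N.starProjection) = N.starProjection ∘L M.starProjection := by
  rw [ContinuousLinearMap.adjoint_comp, (isSelfAdjoint_starProjection M).adjoint_eq,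
    (isSelfAdjoint_starProjection N).adjoint_eq]

theorem isClosed_range_starProjection_comp_iff :
    IsClosed (LinearMap.range ((M.starProjection ∘L N.starProjection : E →L[𝕜] E) : E →ₗ[𝕜] E) :
      Set E) ↔ IsClosed ((M ⊔ Nᗮ : Submodule 𝕜 E) : Set E) := by
  rw [← isClosed_range_adjoint_iff, adjoint_starProjection_comp, toLinearMap_comp,
    LinearMap.range_comp, range_starProjection, isClosed_map_starProjection_iff]

theorem topologicalClosure_range_starProjection_comp_sup_ker :
    (LinearMap.range
        ((M.starProjection ∘L N.starProjection : E →L[𝕜] E) : E →ₗ[𝕜] E)).topologicalClosure ⊔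
      LinearMap.ker ((M.starProjection ∘L N.starProjection : E →L[𝕜] E) : E →ₗ[𝕜] E) =
      (M ⊔ Nᗮ) ⊔ (M ⊔ Nᗮ)ᗮ := by
  set T := M.starProjection ∘L N.starProjection
  set C := (LinearMap.range (T : E →ₗ[𝕜] E)).topologicalClosure
  have : CompleteSpace C := (isClosed_topologicalClosure _).completeSpace_coe
  have hCM : C ≤ M := by
    refine topologicalClosure_minimal _ ?_ M.isClosed_of_hasOrthogonalProjection
    rw [toLinearMap_comp, LinearMap.range_comp]
    exact (map_le_range).trans (range_starProjection M).le
  have hCperp : Cᗮ ⊓ M ≤ Nᗮ := by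
    intro x hx
    obtain ⟨hxC, hxM⟩ := mem_inf.mp hx
    rw [orthogonal_closure, T.orthogonal_range, adjoint_starProjection_comp, LinearMap.mem_ker,
      ContinuousLinearMap.coe_coe, ContinuousLinearMap.comp_apply,
      starProjection_eq_self_iff.mpr hxM] at hxC
    exact (starProjection_apply_eq_zero_iff N).mp hxC
  have hCN : C ⊔ Nᗮ = M ⊔ Nᗮ := by
    refine le_antisymm (sup_le_sup_right hCM _) (sup_le ?_ le_sup_right)
    calc M = C ⊔ Cᗮ ⊓ M := (sup_orthogonal_inf_of_hasOrthogonalProjection hCM).symm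
      _ ≤ C ⊔ Nᗮ := sup_le_sup_left hCperp _
  rw [ker_starProjection_comp, sup_comm ((M ⊔ Nᗮ)ᗮ), ← sup_assoc, hCN]

end TwoProjections

end Submodule

theorem IsOrthoProj.isStarProjection {P : H →L[ℂ] H} (hP : IsOrthoProj P) : IsStarProjection P :=
  ⟨hP.1, hP.2⟩

theorem stmt6 (P Q T : H →L[ℂ] H) (hP : IsOrthoProj P) (hQ : IsOrthoProj Q)
    (hT : T = P ∘L Q) :
    IsClosed ((LinearMap.range (T : H →ₗ[ℂ] H) : Submodule ℂ H) : Set H) ↔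
      (LinearMap.range (T : H →ₗ[ℂ] H)).topologicalClosure ⊔ LinearMap.ker (T : H →ₗ[ℂ] H) = ⊤ := by
  obtain ⟨M, _, rfl⟩ := isStarProjection_iff_eq_starProjection.mp hP.isStarProjection
  obtain ⟨N, _, rfl⟩ := isStarProjection_iff_eq_starProjection.mp hQ.isStarProjection
  subst hT
  rw [isClosed_range_starProjection_comp_iff, topologicalClosure_range_starProjection_comp_sup_ker,
    sup_orthogonal_eq_top_iff_isClosed]
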